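/- If two classical crossings x, x' of a braid word β form a bigon (they lie on the same pair of strands, with no classical crossing between them along either of those strands), then the braid word β' obtained by deleting the letters x and x' represents the same element of F_n as β. -/

import Mathlib

/-!
In `F_n` the word `τ_{b-1} ⋯ τ_{a+1} ζ_a τ_{a+1} ⋯ τ_{b-1}` is a classical crossing of the
strands at positions `a < b`, with the strands in between passing virtually. Such a generalized
crossing can be moved to the right past any letter that is not a classical crossing on one of
its two strands, at the cost of moving its two positions by the transposition of that letter:
far letters commute with it, letters strictly between `a` and `b` pass through by the virtual and
semivirtual third Reidemeister relations, and virtual letters meeting one of its strands shift it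
by `τ_i² = 1`. In a bigon no classical crossing between `x` and `x'` meets their two strands, so
`x` can be pushed along the word up to `x'`, where it arrives as the letter `x'` itself; then
`x' x' = 1`.
-/

set_option maxHeartbeats 1000000

namespace OneTermBracket

/-- Letters (generators) of free braid words on `n` strands:
`zeta i` is a classical crossing, `tau i` a virtual crossing, `1 ≤ i+1 ≤ n-1`. -/
inductive Letter (n : ℕ) where
  | zeta (i : Fin (n-1))
  | tau  (i : Fin (n-1))
deriving DecidableEq

namespace Letter

def idx {n : ℕ} : Letter n → Fin (n-1)
  | zeta i => i
  | tau i => i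

def isZeta {n : ℕ} : Letter n → Bool
  | zeta _ => true
  | tau _ => false

end Letter

def lo {n : ℕ} (i : Fin (n-1)) : Fin n := ⟨i.1, by have := i.2; omega⟩
def hi {n : ℕ} (i : Fin (n-1)) : Fin n := ⟨i.1 + 1, by have := i.2; omega⟩

/-- The transposition `(i, i+1)` of `{1, …, n}`. -/
def sPerm {n : ℕ} (i : Fin (n-1)) : Equiv.Perm (Fin n) := Equiv.swap (lo i) (hi i)

/-- Each letter acts on positions as the transposition `(i, i+1)`. -/
def transOf {n : ℕ} (g : Letter n) : Equiv.Perm (Fin n) := sPerm g.idx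

/-- The permutation realized by the prefix of length `j` of a braid word,
mapping the top label of a strand to its position at level `j`. -/
def prefPerm {n : ℕ} (w : List (Letter n)) (j : ℕ) : Equiv.Perm (Fin n) :=
  (((w.take j).map transOf).reverse).prod

/-- The permutation `P(β)` of a braid word (top endpoint `k` goes to bottom endpoint `P k`). -/
def permOf {n : ℕ} (w : List (Letter n)) : Equiv.Perm (Fin n) :=
  ((w.map transOf).reverse).prod

/-- The unordered pair of (top labels of the) strands crossing at position `j` of `w`. -/
def strandsAt {n : ℕ} (w : List (Letter n)) (j : ℕ) : Option (Sym2 (Fin n)) :=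
  (w[j]?).map fun g => s((prefPerm w j)⁻¹ (lo g.idx), (prefPerm w j)⁻¹ (hi g.idx))

/-- Component-wise parity determined by a partition `{1,…,n} = N₁ ⊔ N₂` (encoded by
`c : Fin n → Bool`): a classical crossing is odd (`1`) iff its two strands lie in
different parts. Non-classical positions get `0`. -/
def cwParity {n : ℕ} (c : Fin n → Bool) (w : List (Letter n)) (j : ℕ) : ZMod 2 :=
  match w[j]? with
  | some (.zeta i) =>
      if c ((prefPerm w j)⁻¹ (lo i)) = c ((prefPerm w j)⁻¹ (hi i)) then 0 else 1
  | _ => 0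

/-- The defining relations of `F_n` and `FB_n` which do not involve
`ζ_i² = 1` or the classical third Reidemeister move ("strong" moves). -/
inductive RelStrong (n : ℕ) : List (Letter n) → List (Letter n) → Prop
  | tt (i : Fin (n-1)) : RelStrong n [.tau i, .tau i] []
  | virt (i : Fin (n-1)) : RelStrong n [.zeta i, .tau i] [.tau i, .zeta i]
  | far_zz (i j : Fin (n-1)) (h : 2 ≤ Nat.dist i j) :
      RelStrong n [.zeta i, .zeta j] [.zeta j, .zeta i]
  | far_zt (i j : Fin (n-1)) (h : 2 ≤ Nat.dist i j) :
      RelStrong n [.zeta i, .tau j] [.tau j, .zeta i]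
  | far_tt (i j : Fin (n-1)) (h : 2 ≤ Nat.dist i j) :
      RelStrong n [.tau i, .tau j] [.tau j, .tau i]
  | r3v (i j : Fin (n-1)) (h : (j:ℕ) = (i:ℕ) + 1) :
      RelStrong n [.tau i, .tau j, .tau i] [.tau j, .tau i, .tau j]
  | semi (i j : Fin (n-1)) (h : (j:ℕ) = (i:ℕ) + 1) :
      RelStrong n [.tau i, .tau j, .zeta i] [.zeta j, .tau i, .tau j]

/-- The defining relations of `F_n`. -/
inductive RelF (n : ℕ) : List (Letter n) → List (Letter n) → Prop
  | strong {r1 r2} : RelStrong n r1 r2 → RelF n r1 r2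
  | zz (i : Fin (n-1)) : RelF n [.zeta i, .zeta i] []

/-- The defining relations of the free braid group `FB_n`. -/
inductive RelFB (n : ℕ) : List (Letter n) → List (Letter n) → Prop
  | ofF {r1 r2} : RelF n r1 r2 → RelFB n r1 r2
  | r3c (i j : Fin (n-1)) (h : (j:ℕ) = (i:ℕ) + 1) :
      RelFB n [.zeta i, .zeta j, .zeta i] [.zeta j, .zeta i, .zeta j]

/-- One application of a relation from `R` inside a word. -/
def StepOf {n : ℕ} (R : List (Letter n) → List (Letter n) → Prop)
    (w1 w2 : List (Letter n)) : Prop :=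
  ∃ A B r1 r2, R r1 r2 ∧ w1 = A ++ r1 ++ B ∧ w2 = A ++ r2 ++ B

/-- Strong equivalence: all moves of `F_n` except `ζ_i² = 1`. -/
def StrongEq {n : ℕ} (w1 w2 : List (Letter n)) : Prop :=
  Relation.EqvGen (StepOf (RelStrong n)) w1 w2

/-- Equivalence of braid words as elements of `F_n`. -/
def EqF {n : ℕ} (w1 w2 : List (Letter n)) : Prop :=
  Relation.EqvGen (StepOf (RelF n)) w1 w2

/-- Equivalence of braid words as elements of the free braid group `FB_n`. -/
def EqFB {n : ℕ} (w1 w2 : List (Letter n)) : Prop :=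
  Relation.EqvGen (StepOf (RelFB n)) w1 w2

/-- The parity axioms, for a parity `P` defined on the class `C` of braid words.
`P w j` is the parity of the crossing at position `j` of `w` (only classical
positions matter). -/
structure IsParity {n : ℕ} (C : List (Letter n) → Prop)
    (P : List (Letter n) → ℕ → ZMod 2) : Prop where
  /-- Crossings not taking part in a relation keep their parity (part before). -/
  untouched_left : ∀ A B r1 r2, RelFB n r1 r2 →
    C (A ++ r1 ++ B) → C (A ++ r2 ++ B) → ∀ j < A.length,
    P (A ++ r1 ++ B) j = P (A ++ r2 ++ B) j
  /-- Crossings not taking part in a relation keep their parity (part after). -/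
  untouched_right : ∀ A B r1 r2, RelFB n r1 r2 →
    C (A ++ r1 ++ B) → C (A ++ r2 ++ B) → ∀ j < B.length,
    P (A ++ r1 ++ B) (A.length + r1.length + j) = P (A ++ r2 ++ B) (A.length + r2.length + j)
  /-- In commutation-type relations (far commutativity, virtualization), the two
  letters keep their parities. -/
  comm : ∀ A B x y, RelFB n [x, y] [y, x] →
    C (A ++ [x, y] ++ B) → C (A ++ [y, x] ++ B) →
    P (A ++ [x, y] ++ B) A.length = P (A ++ [y, x] ++ B) (A.length + 1) ∧
    P (A ++ [x, y] ++ B) (A.length + 1) = P (A ++ [y, x] ++ B) A.length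
  /-- In a classical second Reidemeister move both crossings have the same parity. -/
  r2c : ∀ A B (i : Fin (n-1)),
    C (A ++ [.zeta i, .zeta i] ++ B) → C (A ++ B) →
    P (A ++ [.zeta i, .zeta i] ++ B) A.length
      = P (A ++ [.zeta i, .zeta i] ++ B) (A.length + 1)
  /-- In a semivirtual move, the classical crossing keeps its parity. -/
  semiv : ∀ A B (i j : Fin (n-1)), (j:ℕ) = (i:ℕ) + 1 →
    C (A ++ [.tau i, .tau j, .zeta i] ++ B) →
    C (A ++ [.zeta j, .tau i, .tau j] ++ B) →
    P (A ++ [.tau i, .tau j, .zeta i] ++ B) (A.length + 2)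
      = P (A ++ [.zeta j, .tau i, .tau j] ++ B) A.length
  /-- In a classical third Reidemeister move the number of odd crossings is even. -/
  r3_even : ∀ A B (i j : Fin (n-1)), (j:ℕ) = (i:ℕ) + 1 →
    C (A ++ [.zeta i, .zeta j, .zeta i] ++ B) →
    C (A ++ [.zeta j, .zeta i, .zeta j] ++ B) →
    P (A ++ [.zeta i, .zeta j, .zeta i] ++ B) A.length
      + P (A ++ [.zeta i, .zeta j, .zeta i] ++ B) (A.length + 1)
      + P (A ++ [.zeta i, .zeta j, .zeta i] ++ B) (A.length + 2) = 0
  /-- In a classical third Reidemeister move, upper/middle/lower crossings on the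
  left correspond to lower/middle/upper crossings on the right with equal parities. -/
  r3_corr : ∀ A B (i j : Fin (n-1)), (j:ℕ) = (i:ℕ) + 1 →
    C (A ++ [.zeta i, .zeta j, .zeta i] ++ B) →
    C (A ++ [.zeta j, .zeta i, .zeta j] ++ B) →
    P (A ++ [.zeta i, .zeta j, .zeta i] ++ B) A.length
      = P (A ++ [.zeta j, .zeta i, .zeta j] ++ B) (A.length + 2) ∧
    P (A ++ [.zeta i, .zeta j, .zeta i] ++ B) (A.length + 1)
      = P (A ++ [.zeta j, .zeta i, .zeta j] ++ B) (A.length + 1) ∧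
    P (A ++ [.zeta i, .zeta j, .zeta i] ++ B) (A.length + 2)
      = P (A ++ [.zeta j, .zeta i, .zeta j] ++ B) A.length

/-- Delete from `w` all classical letters whose parity (given by `par`) is even. -/
def deleteEven {n : ℕ} (w : List (Letter n)) (par : ℕ → ZMod 2) : List (Letter n) :=
  (List.range w.length).filterMap fun j =>
    (w[j]?).bind fun g =>
      match g with
      | .zeta i => if par j = 0 then none else some (.zeta i)
      | .tau i => some (.tau i)

/-- The one-term parity bracket: delete all even classical crossings. -/
def bracket {n : ℕ} (P : List (Letter n) → ℕ → ZMod 2) (w : List (Letter n)) :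
    List (Letter n) :=
  deleteEven w (P w)

/-- Positions of classical crossings of a word. -/
def ZetaPos {n : ℕ} (w : List (Letter n)) : Set ℕ :=
  {j | ∃ i, w[j]? = some (Letter.zeta i)}

/-- The classical crossings at positions `j1 < j2` form a bigon: they lie on the same
pair of strands, and no classical crossing between them lies on either of those strands. -/
def IsBigon {n : ℕ} (w : List (Letter n)) (j1 j2 : ℕ) : Prop :=
  j1 < j2 ∧ j1 ∈ ZetaPos w ∧ j2 ∈ ZetaPos w ∧
  strandsAt w j1 = strandsAt w j2 ∧
  ∀ k, j1 < k → k < j2 → k ∈ ZetaPos w →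
    ∀ e e', strandsAt w j1 = some e → strandsAt w k = some e' → ∀ a ∈ e, a ∉ e'

/-- Delete the letters at two given positions. -/
def delete2 {n : ℕ} (w : List (Letter n)) (j1 j2 : ℕ) : List (Letter n) :=
  (w.eraseIdx (max j1 j2)).eraseIdx (min j1 j2)

/-- One bigon reduction. -/
def BigonStep {n : ℕ} (w w' : List (Letter n)) : Prop :=
  ∃ j1 j2, IsBigon w j1 j2 ∧ w' = delete2 w j1 j2

/-- A word is irreducible if it admits no bigon reduction. -/
def Irreducible {n : ℕ} (w : List (Letter n)) : Prop := ¬ ∃ j1 j2, IsBigon w j1 j2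

/-- Number of classical letters of a word. -/
def countZeta {n : ℕ} (w : List (Letter n)) : ℕ := (w.filter Letter.isZeta).length

/-- `φ` is an isomorphism of the decorated graphs `Γ(w1) ≅ Γ(w2)`, encoded
combinatorially: a bijection of classical crossings preserving the pair of strands
through each crossing, the order of crossings along each strand, and the endpoint
structure (the permutation). -/
structure IsGammaIso {n : ℕ} (w1 w2 : List (Letter n)) (φ : ℕ → ℕ) : Prop where
  maps : ∀ j ∈ ZetaPos w1, φ j ∈ ZetaPos w2
  inj : ∀ j ∈ ZetaPos w1, ∀ j' ∈ ZetaPos w1, φ j = φ j' → j = j'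
  surj : ∀ k ∈ ZetaPos w2, ∃ j ∈ ZetaPos w1, φ j = k
  strands : ∀ j ∈ ZetaPos w1, strandsAt w2 (φ j) = strandsAt w1 j
  order : ∀ j ∈ ZetaPos w1, ∀ j' ∈ ZetaPos w1, j < j' →
    (∃ e e' a, strandsAt w1 j = some e ∧ strandsAt w1 j' = some e' ∧ a ∈ e ∧ a ∈ e') →
    φ j < φ j'
  perm : permOf w1 = permOf w2

/-! ### The groups `F_n` and `FB_n` as presented groups -/

/-- Generators: `Sum.inl i` is the classical generator `ζ_i`,
`Sum.inr i` is the virtual generator `τ_i`. -/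
abbrev GGen (n : ℕ) := Fin (n-1) ⊕ Fin (n-1)

def zg {n : ℕ} (i : Fin (n-1)) : FreeGroup (GGen n) := FreeGroup.of (Sum.inl i)
def tg {n : ℕ} (i : Fin (n-1)) : FreeGroup (GGen n) := FreeGroup.of (Sum.inr i)

/-- The relators of `F_n`. -/
def FRels (n : ℕ) : Set (FreeGroup (GGen n)) :=
  (⋃ i, {zg i * zg i}) ∪ (⋃ i, {tg i * tg i}) ∪
  (⋃ i, {zg i * tg i * (tg i * zg i)⁻¹}) ∪
  (⋃ (i : Fin (n-1)) (j : Fin (n-1)) (_ : 2 ≤ Nat.dist i j),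
    {zg i * zg j * (zg j * zg i)⁻¹, zg i * tg j * (tg j * zg i)⁻¹,
     tg i * tg j * (tg j * tg i)⁻¹}) ∪
  (⋃ (i : Fin (n-1)) (j : Fin (n-1)) (_ : (j:ℕ) = (i:ℕ) + 1),
    {tg i * tg j * tg i * (tg j * tg i * tg j)⁻¹,
     tg i * tg j * zg i * (zg j * tg i * tg j)⁻¹})

/-- The relators of `FB_n`: those of `F_n` together with the classical third
Reidemeister relation. -/
def FBRels (n : ℕ) : Set (FreeGroup (GGen n)) :=
  FRels n ∪
  (⋃ (i : Fin (n-1)) (j : Fin (n-1)) (_ : (j:ℕ) = (i:ℕ) + 1),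
    {zg i * zg j * zg i * (zg j * zg i * zg j)⁻¹})

/-- The group `F_n`. -/
abbrev FGrp (n : ℕ) := PresentedGroup (FRels n)

/-- The free braid group `FB_n`. -/
abbrev FBGrp (n : ℕ) := PresentedGroup (FBRels n)

def zF {n : ℕ} (i : Fin (n-1)) : FGrp n := PresentedGroup.of (Sum.inl i)
def tF {n : ℕ} (i : Fin (n-1)) : FGrp n := PresentedGroup.of (Sum.inr i)

/-- Evaluation of a braid word in `F_n`. -/
def evalF {n : ℕ} (w : List (Letter n)) : FGrp n :=
  (w.map fun g => match g with
    | Letter.zeta i => zF i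
    | Letter.tau i => tF i).prod

/-- For each unordered pair of strands, the mod-2 number of classical letters of `w`
at which these two strands cross (strand labels traced from the top). -/
def crossPar {n : ℕ} : List (Letter n) → Sym2 (Fin n) → ZMod 2
  | [], _ => 0
  | g :: rest, e =>
    (match g with
     | Letter.zeta i => if e = s(lo i, hi i) then (1 : ZMod 2) else 0
     | Letter.tau _ => 0) + crossPar rest (e.map (transOf g))

/-! ### Chord diagrams and the Gaussian parity -/

/-- The setoid on strands given by `SameCycle`; its classes are the orbits of `σ`,
i.e. the components of the closure. -/
def sameCycleSetoid {n : ℕ} (σ : Equiv.Perm (Fin n)) : Setoid (Fin n) :=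
  ⟨σ.SameCycle, ⟨Equiv.Perm.SameCycle.refl σ, Equiv.Perm.SameCycle.symm,
    Equiv.Perm.SameCycle.trans⟩⟩

/-- The rank of a strand in the single cycle of `σ` starting from strand `0`. -/
noncomputable def rankIn {n : ℕ} [NeZero n] (σ : Equiv.Perm (Fin n)) (a : Fin n) : ℕ :=
  ((Function.invFun (fun k : Fin n => (σ ^ (k : ℕ)) 0) a : Fin n) : ℕ)

/-- Coordinates on the core circle of the two endpoints of the chord of the classical
crossing at position `j` (the circle traverses the strands in the cyclic order of `σ`). -/
noncomputable def chordEnds {n : ℕ} [NeZero n] (w : List (Letter n))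
    (σ : Equiv.Perm (Fin n)) (j : ℕ) : ℕ × ℕ :=
  match w[j]? with
  | some (Letter.zeta i) =>
      (rankIn σ ((prefPerm w j)⁻¹ (lo i)) * w.length + j,
       rankIn σ ((prefPerm w j)⁻¹ (hi i)) * w.length + j)
  | _ => (0, 0)

/-- Two chords are linked iff the endpoints of one separate the endpoints of the
other on the core circle. -/
def LinkedChords {n : ℕ} [NeZero n] (w : List (Letter n)) (σ : Equiv.Perm (Fin n))
    (j k : ℕ) : Prop :=
  Xor' (min (chordEnds w σ j).1 (chordEnds w σ j).2 < (chordEnds w σ k).1 ∧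
        (chordEnds w σ k).1 < max (chordEnds w σ j).1 (chordEnds w σ j).2)
       (min (chordEnds w σ j).1 (chordEnds w σ j).2 < (chordEnds w σ k).2 ∧
        (chordEnds w σ k).2 < max (chordEnds w σ j).1 (chordEnds w σ j).2)

/-- The Gaussian parity of the classical crossing at position `j`: the mod-2 number
of chords linked with its chord. Even (`0`) iff linked with evenly many chords. -/
noncomputable def gaussParity {n : ℕ} [NeZero n] (w : List (Letter n))
    (σ : Equiv.Perm (Fin n)) (j : ℕ) : ZMod 2 :=
  (Nat.card {k : ℕ // k < w.length ∧ k ∈ ZetaPos w ∧ k ≠ j ∧ LinkedChords w σ j k} : ZMod 2)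

section BigonReduction

variable {n : ℕ}

theorem getElem?_append_length_add {α : Type*} (A R : List α) (k : ℕ) :
    (A ++ R)[A.length + k]? = R[k]? := by
  rw [List.getElem?_append_right (by omega), Nat.add_sub_cancel_left]

theorem mem_zetaPos_append_length_add {A R : List (Letter n)} {k : ℕ} :
    A.length + k ∈ ZetaPos (A ++ R) ↔ k ∈ ZetaPos R := by
  simp [ZetaPos, getElem?_append_length_add]

theorem prefPerm_append_length_add (A R : List (Letter n)) (k : ℕ) :
    prefPerm (A ++ R) (A.length + k) = prefPerm R k * permOf A := by
  simp [prefPerm, permOf, List.take_length_add_append]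

theorem strandsAt_append_length_add (A R : List (Letter n)) (k : ℕ) :
    strandsAt (A ++ R) (A.length + k) = (strandsAt R k).map (Sym2.map ⇑(permOf A)⁻¹) := by
  simp [strandsAt, prefPerm_append_length_add, getElem?_append_length_add, Option.map_map,
    Function.comp_def]

theorem strandsAt_append_of_lt {M : List (Letter n)} (R : List (Letter n)) {k : ℕ}
    (hk : k < M.length) : strandsAt (M ++ R) k = strandsAt M k := by
  simp [strandsAt, prefPerm, List.getElem?_append_left hk, List.take_append_of_le_length hk.le]

theorem strandsAt_cons_zero (g : Letter n) (R : List (Letter n)) :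
    strandsAt (g :: R) 0 = some s(lo g.idx, hi g.idx) := by
  simp [strandsAt, prefPerm]

theorem strandsAt_cons_succ (g : Letter n) (R : List (Letter n)) (k : ℕ) :
    strandsAt (g :: R) (k + 1) = (strandsAt R k).map (Sym2.map (transOf g)) := by
  have h := strandsAt_append_length_add [g] R k
  rw [List.singleton_append, List.length_singleton, add_comm] at h
  simp [h, permOf, transOf, sPerm]

theorem mem_zetaPos_cons_succ {g : Letter n} {R : List (Letter n)} {k : ℕ} :
    k + 1 ∈ ZetaPos (g :: R) ↔ k ∈ ZetaPos R := by
  simp [ZetaPos]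

theorem permOf_cons (g : Letter n) (M : List (Letter n)) :
    permOf (g :: M) = permOf M * transOf g := by
  simp [permOf]

theorem val_transOf (g : Letter n) (x : Fin n) :
    (transOf g x : ℕ) = Equiv.swap (g.idx : ℕ) (g.idx + 1) x := by
  simp only [transOf, sPerm, Equiv.swap_apply_def, lo, hi]
  split_ifs <;> simp_all [Fin.ext_iff]

theorem transOf_eq_self {g : Letter n} {x : Fin n} (h : x ∉ s(lo g.idx, hi g.idx)) :
    transOf g x = x := by
  rw [Sym2.mem_iff, not_or] at h
  exact Equiv.swap_apply_of_ne_of_ne h.1 h.2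

def FreeStrand (M : List (Letter n)) (x : Fin n) : Prop :=
  ∀ k ∈ ZetaPos M, ∀ e, strandsAt M k = some e → x ∉ e

theorem FreeStrand.cons {g : Letter n} {M : List (Letter n)} {x : Fin n}
    (h : FreeStrand (g :: M) x) :
    (g.isZeta = true → x ∉ s(lo g.idx, hi g.idx)) ∧ FreeStrand M (transOf g x) := by
  constructor
  · intro hg
    cases g with
    | tau => simp [Letter.isZeta] at hg
    | zeta q => exact h 0 ⟨q, rfl⟩ _ (strandsAt_cons_zero _ _)
  · intro k hk e he hxe
    exact h (k + 1) (mem_zetaPos_cons_succ.2 hk) _ (by rw [strandsAt_cons_succ, he]; rfl)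
      (Sym2.mem_map.2 ⟨_, hxe, by simp [transOf, sPerm]⟩)

theorem delete2_append_zeta_cons (A M B : List (Letter n)) (g g' : Letter n) :
    delete2 (A ++ g :: (M ++ g' :: B)) A.length (A.length + (M.length + 1)) = A ++ (M ++ B) := by
  simp [delete2, List.eraseIdx_append_of_length_le]

theorem lt_length_of_mem_zetaPos {w : List (Letter n)} {k : ℕ} (hk : k ∈ ZetaPos w) :
    k < w.length := by
  obtain ⟨q, hq⟩ := hk
  exact (List.getElem?_eq_some_iff.1 hq).1

theorem exists_eq_append_zeta_cons {w : List (Letter n)} {j : ℕ} (hj : j ∈ ZetaPos w) :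
    ∃ A i R, w = A ++ .zeta i :: R ∧ A.length = j := by
  obtain ⟨i, hi⟩ := hj
  obtain ⟨hjw, hwj⟩ := List.getElem?_eq_some_iff.1 hi
  exact ⟨w.take j, i, w.drop (j + 1),
    by rw [← hwj, ← List.drop_eq_getElem_cons, List.take_append_drop], by simp; omega⟩

theorem IsBigon.of_append {A R : List (Letter n)} {j₁ j₂ : ℕ}
    (h : IsBigon (A ++ R) (A.length + j₁) (A.length + j₂)) : IsBigon R j₁ j₂ := by
  obtain ⟨hlt, h₁, h₂, hstr, hmid⟩ := h
  rw [strandsAt_append_length_add, strandsAt_append_length_add] at hstr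
  refine ⟨by omega, mem_zetaPos_append_length_add.1 h₁, mem_zetaPos_append_length_add.1 h₂,
    Option.map_injective (Sym2.map.injective (permOf A)⁻¹.injective) hstr, ?_⟩
  intro k hk₁ hk₂ hk e e' he he' a ha ha'
  refine hmid (A.length + k) (by omega) (by omega) (mem_zetaPos_append_length_add.2 hk) _ _
    (by rw [strandsAt_append_length_add, he]; rfl) (by rw [strandsAt_append_length_add, he']; rfl)
    _ (Sym2.mem_map.2 ⟨a, ha, rfl⟩) (Sym2.mem_map.2 ⟨a, ha', rfl⟩)

theorem IsBigon.exists_decomposition {w : List (Letter n)} {j₁ j₂ : ℕ}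
    (h : IsBigon w j₁ j₂) :
    ∃ A i M i' B, w = A ++ Letter.zeta i :: (M ++ Letter.zeta i' :: B) ∧ j₁ = A.length ∧
      j₂ = A.length + (M.length + 1) ∧
      IsBigon (Letter.zeta i :: (M ++ Letter.zeta i' :: B)) 0 (M.length + 1) := by
  obtain ⟨A, i, R, rfl, rfl⟩ := exists_eq_append_zeta_cons h.2.1
  obtain ⟨k, rfl⟩ : ∃ k, j₂ = A.length + (k + 1) :=
    ⟨j₂ - A.length - 1, by have := h.1; omega⟩
  have hk : k ∈ ZetaPos R :=
    mem_zetaPos_cons_succ.1 (mem_zetaPos_append_length_add.1 h.2.2.1)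
  obtain ⟨M, i', B, rfl, rfl⟩ := exists_eq_append_zeta_cons hk
  exact ⟨A, i, M, i', B, rfl, rfl, rfl, IsBigon.of_append (by rwa [add_zero])⟩

section

variable {i i' : Fin (n - 1)} {M B : List (Letter n)}

theorem IsBigon.freeStrand
    (h : IsBigon (Letter.zeta i :: (M ++ Letter.zeta i' :: B)) 0 (M.length + 1))
    {x : Fin n} (hx : x ∈ s(lo i, hi i)) : FreeStrand M x := by
  intro k hk e he hxe
  have hkM := lt_length_of_mem_zetaPos hk
  have hk' : k + 1 ∈ ZetaPos (.zeta i :: (M ++ .zeta i' :: B)) := by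
    obtain ⟨q, hq⟩ := hk
    exact mem_zetaPos_cons_succ.2 ⟨q, by rw [List.getElem?_append_left hkM, hq]⟩
  refine h.2.2.2.2 (k + 1) (by omega) (by omega) hk' _ _ (strandsAt_cons_zero _ _)
    (by rw [strandsAt_cons_succ, strandsAt_append_of_lt _ hkM, he]; rfl)
    (transOf (.zeta i) x) ?_ (Sym2.mem_map.2 ⟨x, hxe, rfl⟩)
  rcases Sym2.mem_iff.1 hx with rfl | rfl <;> simp [transOf, sPerm, Letter.idx]

theorem IsBigon.map_permOf
    (h : IsBigon (Letter.zeta i :: (M ++ Letter.zeta i' :: B)) 0 (M.length + 1)) :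
    s(permOf M (lo i), permOf M (hi i)) = s(lo i', hi i') := by
  have hx' := strandsAt_append_length_add M (.zeta i' :: B) 0
  rw [add_zero, strandsAt_cons_zero] at hx'
  have hstr := h.2.2.2.1
  rw [strandsAt_cons_zero, strandsAt_cons_succ, hx'] at hstr
  have hpair : s(lo i, hi i) = Sym2.map (transOf (.zeta i))
      (Sym2.map ⇑(permOf M)⁻¹ s(lo i', hi i')) := Option.some_injective _ hstr
  calc s(permOf M (lo i), permOf M (hi i))
      = Sym2.map (permOf M) (Sym2.map (transOf (.zeta i)) s(lo i, hi i)) := by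
        simp [transOf, sPerm, Letter.idx, Sym2.eq_swap]
    _ = s(lo i', hi i') := by rw [hpair]; simp [transOf, sPerm]

end

theorem eqvGen_stepOf_append_append {R : List (Letter n) → List (Letter n) → Prop}
    {u v : List (Letter n)} (h : Relation.EqvGen (StepOf R) u v) (A B : List (Letter n)) :
    Relation.EqvGen (StepOf R) (A ++ u ++ B) (A ++ v ++ B) := by
  induction h with
  | rel x y hxy =>
    obtain ⟨A', B', r₁, r₂, hr, rfl, rfl⟩ := hxy
    exact .rel _ _ ⟨A ++ A', B' ++ B, r₁, r₂, hr, by simp, by simp⟩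
  | refl => exact .refl _
  | symm _ _ _ ih => exact .symm _ _ ih
  | trans _ _ _ _ _ ih₁ ih₂ => exact .trans _ _ _ ih₁ ih₂

def eqFCon (n : ℕ) : Con (FreeMonoid (Letter n)) where
  r u v := EqF u.toList v.toList
  iseqv := Relation.EqvGen.is_equivalence _
  mul' {u v x y} huv hxy := by
    show EqF (u * x).toList (v * y).toList
    rw [FreeMonoid.toList_mul, FreeMonoid.toList_mul]
    exact .trans _ (v.toList ++ x.toList) _
      (by simpa using eqvGen_stepOf_append_append huv [] x.toList)
      (by simpa using eqvGen_stepOf_append_append hxy v.toList [])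

/-- Braid words modulo `EqF`, i.e. `F_n` as a monoid; every generator is an involution in it. -/
abbrev FMonoid (n : ℕ) := (eqFCon n).Quotient

theorem two_le_dist {m k : ℕ} (h : m + 2 ≤ k ∨ k + 2 ≤ m) : 2 ≤ Nat.dist m k := by
  unfold Nat.dist; omega

namespace FMonoid

def mk (w : List (Letter n)) : FMonoid n := (FreeMonoid.ofList w : FreeMonoid (Letter n))

theorem mk_eq_mk_iff {u v : List (Letter n)} : mk u = mk v ↔ EqF u v := Con.eq _

@[simp] theorem mk_append (u v : List (Letter n)) : mk (u ++ v) = mk u * mk v := rfl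

@[simp] theorem mk_nil : mk ([] : List (Letter n)) = 1 := rfl

theorem mk_cons (g : Letter n) (w : List (Letter n)) : mk (g :: w) = mk [g] * mk w := rfl

theorem mk_eq_of_relF {r₁ r₂ : List (Letter n)} (h : RelF n r₁ r₂) : mk r₁ = mk r₂ :=
  mk_eq_mk_iff.2 (.rel _ _ ⟨[], [], r₁, r₂, h, by simp, by simp⟩)

theorem mk_pair_eq_of_relF {g₁ g₂ h₁ h₂ : Letter n} (h : RelF n [g₁, g₂] [h₁, h₂]) :
    mk [g₁] * mk [g₂] = mk [h₁] * mk [h₂] :=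
  mk_eq_of_relF h

-- Out-of-range indices give `1`, so that only the relations involving two adjacent
-- indices need a range hypothesis.
def z (m : ℕ) : FMonoid n := if h : m < n - 1 then mk [.zeta ⟨m, h⟩] else 1

def t (m : ℕ) : FMonoid n := if h : m < n - 1 then mk [.tau ⟨m, h⟩] else 1

@[simp] theorem mk_zeta (i : Fin (n - 1)) : mk [.zeta i] = z i := by simp [z]

theorem mk_zeta_cons (i : Fin (n - 1)) (w : List (Letter n)) :
    mk (.zeta i :: w) = z i * mk w := by
  rw [mk_cons, mk_zeta]

@[simp] theorem mk_tau (i : Fin (n - 1)) : mk [.tau i] = t i := by simp [t]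

@[simp] theorem z_mul_self (m : ℕ) : z m * z m = (1 : FMonoid n) := by
  unfold z; split_ifs
  · exact mk_eq_of_relF (.zz _)
  · simp

@[simp] theorem t_mul_self (m : ℕ) : t m * t m = (1 : FMonoid n) := by
  unfold t; split_ifs
  · exact mk_eq_of_relF (.strong (.tt _))
  · simp

@[simp] theorem t_mul_t_mul (m : ℕ) (x : FMonoid n) : t m * (t m * x) = x := by
  rw [← mul_assoc, t_mul_self, one_mul]

theorem commute_z_t (m : ℕ) : Commute (z m) (t m : FMonoid n) := by
  unfold z t; split_ifs
  · exact mk_pair_eq_of_relF (.strong (.virt _))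
  · exact Commute.one_left _

theorem commute_z_z_of_far {m k : ℕ} (h : 2 ≤ Nat.dist m k) :
    Commute (z m) (z k : FMonoid n) := by
  unfold z; split_ifs
  · exact mk_pair_eq_of_relF (.strong (.far_zz _ _ h))
  all_goals simp

theorem commute_z_t_of_far {m k : ℕ} (h : 2 ≤ Nat.dist m k) :
    Commute (z m) (t k : FMonoid n) := by
  unfold z t; split_ifs
  · exact mk_pair_eq_of_relF (.strong (.far_zt _ _ h))
  all_goals simp

theorem commute_t_t_of_far {m k : ℕ} (h : 2 ≤ Nat.dist m k) :
    Commute (t m) (t k : FMonoid n) := by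
  unfold t; split_ifs
  · exact mk_pair_eq_of_relF (.strong (.far_tt _ _ h))
  all_goals simp

theorem t_mul_t_mul_t {m : ℕ} (h : m + 1 < n - 1) :
    t m * t (m + 1) * t m = (t (m + 1) * t m * t (m + 1) : FMonoid n) := by
  simp only [t, dif_pos h, dif_pos (show m < n - 1 by omega)]
  exact mk_eq_of_relF (.strong (.r3v ⟨m, _⟩ ⟨m + 1, h⟩ rfl))

theorem t_mul_t_mul_z {m : ℕ} (h : m + 1 < n - 1) :
    t m * t (m + 1) * z m = (z (m + 1) * t m * t (m + 1) : FMonoid n) := by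
  simp only [t, z, dif_pos h, dif_pos (show m < n - 1 by omega)]
  exact mk_eq_of_relF (.strong (.semi ⟨m, _⟩ ⟨m + 1, h⟩ rfl))

theorem z_mul_t_mul_t {m : ℕ} (h : m + 1 < n - 1) :
    z m * (t (m + 1) * t m) = (t (m + 1) * t m * z (m + 1) : FMonoid n) :=
  calc z m * (t (m + 1) * t m)
      = t (m + 1) * t m * (t m * t (m + 1) * z m) * (t (m + 1) * t m) := by simp [mul_assoc]
    _ = t (m + 1) * t m * (z (m + 1) * t m * t (m + 1)) * (t (m + 1) * t m) := by
      rw [t_mul_t_mul_z h]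
    _ = t (m + 1) * t m * z (m + 1) := by simp [mul_assoc]

/-- `cross a b` is `τ_{b-1} ⋯ τ_{a+1} ζ_a τ_{a+1} ⋯ τ_{b-1}`: a classical crossing of the
strands at positions `a < b`, all strands in between passing virtually. -/
def cross (a : ℕ) : ℕ → FMonoid n
  | 0 => 1
  | b + 1 => if b ≤ a then z a else t b * cross a b * t b

theorem cross_succ_self (a : ℕ) : cross a (a + 1) = (z a : FMonoid n) := by simp [cross]

theorem cross_succ {a b : ℕ} (h : a < b) :
    cross a (b + 1) = (t b * cross a b * t b : FMonoid n) := by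
  simp [cross, not_le.2 h]

theorem commute_cross {x : FMonoid n} {a b : ℕ} (hab : a < b) (hz : Commute x (z a))
    (ht : ∀ k, a < k → k < b → Commute x (t k)) : Commute x (cross a b) := by
  induction b, hab using Nat.le_induction with
  | base => rwa [cross_succ_self]
  | succ b hab ih =>
    rw [cross_succ hab]
    have htb := ht b hab (by omega)
    exact (htb.mul_right (ih fun k hk hkb => ht k hk (by omega))).mul_right htb

theorem cross_shift {a b : ℕ} (hab : a + 2 ≤ b) (hb : b ≤ n - 1) :
    cross (a + 1) b = (t a * cross a b * t a : FMonoid n) := by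
  induction b, hab using Nat.le_induction with
  | base =>
    rw [cross_succ_self, cross_succ (by omega), cross_succ_self]
    calc z (a + 1) = z (a + 1) * t a * t (a + 1) * (t (a + 1) * t a) := by simp [mul_assoc]
      _ = t a * t (a + 1) * z a * (t (a + 1) * t a) := by rw [t_mul_t_mul_z (by omega)]
      _ = t a * (t (a + 1) * z a * t (a + 1)) * t a := by simp only [mul_assoc]
  | succ b hab ih =>
    rw [cross_succ (by omega), cross_succ (by omega), ih (by omega)]
    have hc : t a * t b = (t b * t a : FMonoid n) :=
      (commute_t_t_of_far (two_le_dist (by omega))).eq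
    calc t b * (t a * cross a b * t a) * t b = t b * t a * cross a b * (t a * t b) := by
          simp only [mul_assoc]
      _ = t a * t b * cross a b * (t b * t a) := by rw [hc]
      _ = t a * (t b * cross a b * t b) * t a := by simp only [mul_assoc]

/-- Conjugation by `τ_{m+1} τ_m` turns `x`, at position `m`, into `y`, at position `m + 1`,
which commutes with `cross a m`. -/
theorem commute_cross_of_conj {x y : FMonoid n} {a m b : ℕ} (ham : a < m) (hmb : m + 2 ≤ b)
    (hxy : x * (t (m + 1) * t m) = t (m + 1) * t m * y)
    (hyx : y * (t m * t (m + 1)) = t m * t (m + 1) * x)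
    (hy : Commute y (cross a m)) (hx : ∀ k, m + 2 ≤ k → Commute x (t k)) :
    Commute x (cross a b) := by
  induction b, hmb using Nat.le_induction with
  | base =>
    rw [cross_succ (by omega), cross_succ ham]
    unfold Commute SemiconjBy
    calc x * (t (m + 1) * (t m * cross a m * t m) * t (m + 1))
        = x * (t (m + 1) * t m) * cross a m * (t m * t (m + 1)) := by simp only [mul_assoc]
      _ = t (m + 1) * t m * (y * cross a m) * (t m * t (m + 1)) := by
        rw [hxy]; simp only [mul_assoc]
      _ = t (m + 1) * t m * cross a m * (y * (t m * t (m + 1))) := by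
        rw [hy.eq]; simp only [mul_assoc]
      _ = t (m + 1) * (t m * cross a m * t m) * t (m + 1) * x := by
        rw [hyx]; simp only [mul_assoc]
  | succ b hmb ih =>
    rw [cross_succ (by omega)]
    exact ((hx b hmb).mul_right ih).mul_right (hx b hmb)

theorem commute_z_cross {a b m : ℕ} (hab : a < b) (hb : b ≤ n - 1)
    (hm : (m + 2 ≤ a ∨ b + 1 ≤ m) ∨ (a < m ∧ m + 2 ≤ b)) :
    Commute (z m) (cross a b : FMonoid n) := by
  rcases hm with hm | ⟨ham, hmb⟩
  · exact commute_cross hab (commute_z_z_of_far (two_le_dist (by omega)))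
      fun k _ _ => commute_z_t_of_far (two_le_dist (by omega))
  · refine commute_cross_of_conj ham hmb (z_mul_t_mul_t (by omega))
      (by rw [← mul_assoc, ← t_mul_t_mul_z (by omega)]) ?_
      fun k _ => commute_z_t_of_far (two_le_dist (by omega))
    exact commute_cross ham (commute_z_z_of_far (two_le_dist (by omega)))
      fun k _ _ => commute_z_t_of_far (two_le_dist (by omega))

theorem commute_t_cross {a b m : ℕ} (hab : a < b) (hb : b ≤ n - 1)
    (hm : (m + 2 ≤ a ∨ b + 1 ≤ m) ∨ (a < m ∧ m + 2 ≤ b)) :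
    Commute (t m) (cross a b : FMonoid n) := by
  rcases hm with hm | ⟨ham, hmb⟩
  · exact commute_cross hab (commute_z_t_of_far (two_le_dist (by omega))).symm
      fun k _ _ => commute_t_t_of_far (two_le_dist (by omega))
  · refine commute_cross_of_conj ham hmb (by rw [← mul_assoc, t_mul_t_mul_t (by omega)])
      (by rw [← mul_assoc, t_mul_t_mul_t (by omega)]) ?_
      fun k _ => commute_t_t_of_far (two_le_dist (by omega))
    exact commute_cross ham (commute_z_t_of_far (two_le_dist (by omega))).symm
      fun k _ _ => commute_t_t_of_far (two_le_dist (by omega))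

def crossAt (x y : ℕ) : FMonoid n := cross (min x y) (max x y)

theorem crossAt_comm (x y : ℕ) : crossAt x y = (crossAt y x : FMonoid n) := by
  rw [crossAt, crossAt, min_comm, max_comm]

theorem crossAt_of_lt {x y : ℕ} (h : x < y) : crossAt x y = (cross x y : FMonoid n) := by
  rw [crossAt, min_eq_left h.le, max_eq_right h.le]

theorem cross_mul_t {a b m : ℕ} (hab : a < b) (hb : b ≤ n - 1) :
    cross a b * t m =
      (t m * crossAt (Equiv.swap m (m + 1) a) (Equiv.swap m (m + 1) b) : FMonoid n) := by
  have hcases : ((m + 2 ≤ a ∨ b + 1 ≤ m) ∨ (a < m ∧ m + 2 ≤ b)) ∨ a = m + 1 ∨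
      (a = m ∧ b = m + 1) ∨ (a = m ∧ m + 2 ≤ b) ∨ (a < m ∧ b = m + 1) ∨ b = m := by
    omega
  rcases hcases with hm | rfl | ⟨rfl, rfl⟩ | ⟨rfl, hmb⟩ | ⟨ham, rfl⟩ | rfl
  · rw [Equiv.swap_apply_of_ne_of_ne (by omega) (by omega),
      Equiv.swap_apply_of_ne_of_ne (by omega) (by omega), crossAt_of_lt hab]
    exact (commute_t_cross hab hb hm).eq.symm
  · rw [Equiv.swap_apply_right, Equiv.swap_apply_of_ne_of_ne (by omega) (by omega),
      crossAt_of_lt (by omega), cross_shift (by omega) hb]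
    simp [mul_assoc]
  · rw [Equiv.swap_apply_left, Equiv.swap_apply_right, crossAt_comm, crossAt_of_lt (by omega),
      cross_succ_self]
    exact commute_z_t a
  · rw [Equiv.swap_apply_left, Equiv.swap_apply_of_ne_of_ne (by omega) (by omega),
      crossAt_of_lt (by omega), cross_shift (by omega) hb]
    simp [mul_assoc]
  · rw [Equiv.swap_apply_of_ne_of_ne (by omega) (by omega), Equiv.swap_apply_right,
      crossAt_of_lt ham, cross_succ ham]
    simp [mul_assoc]
  · rw [Equiv.swap_apply_of_ne_of_ne (by omega) (by omega), Equiv.swap_apply_left,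
      crossAt_of_lt (by omega), cross_succ hab]
    simp [mul_assoc]

/-- `e` is a pair of positions, not of strand labels as in `strandsAt`. -/
def crossing (e : Sym2 (Fin n)) : FMonoid n :=
  Sym2.lift ⟨fun x y : Fin n => crossAt x y, fun x y => crossAt_comm x y⟩ e

@[simp] theorem crossing_mk (x y : Fin n) : crossing s(x, y) = crossAt (x : ℕ) y := rfl

theorem crossing_lo_hi (i : Fin (n - 1)) : crossing s(lo i, hi i) = z i := by
  rw [crossing_mk, crossAt_of_lt (by simp [lo, hi])]
  exact cross_succ_self _

theorem crossing_mul_mk_singleton {g : Letter n} {x y : Fin n} (hxy : x ≠ y)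
    (hx : g.isZeta = true → x ∉ s(lo g.idx, hi g.idx))
    (hy : g.isZeta = true → y ∉ s(lo g.idx, hi g.idx)) :
    crossing s(x, y) * mk [g] = mk [g] * crossing s(transOf g x, transOf g y) := by
  wlog hlt : x < y generalizing x y
  · rw [Sym2.eq_swap, Sym2.eq_swap (a := transOf g x)]
    exact this hxy.symm hy hx (lt_of_le_of_ne (not_lt.1 hlt) hxy.symm)
  have hyn : (y : ℕ) ≤ n - 1 := by omega
  cases g with
  | zeta q =>
    have hx' := hx rfl
    have hy' := hy rfl
    rw [transOf_eq_self hx', transOf_eq_self hy', crossing_mk, crossAt_of_lt hlt, mk_zeta]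
    simp only [Letter.idx, Sym2.mem_iff, not_or, Fin.ext_iff, lo, hi] at hx' hy'
    exact (commute_z_cross hlt (by omega) (by omega)).eq.symm
  | tau q =>
    rw [crossing_mk, crossing_mk, crossAt_of_lt hlt, val_transOf, val_transOf, mk_tau]
    exact cross_mul_t hlt (by omega)

theorem crossing_mul_mk {M : List (Letter n)} {x y : Fin n} (hxy : x ≠ y)
    (hx : FreeStrand M x) (hy : FreeStrand M y) :
    crossing s(x, y) * mk M = mk M * crossing s(permOf M x, permOf M y) := by
  induction M generalizing x y with
  | nil => simp [permOf]
  | cons g M ih =>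
    obtain ⟨hgx, hx⟩ := hx.cons
    obtain ⟨hgy, hy⟩ := hy.cons
    rw [mk_cons, ← mul_assoc, crossing_mul_mk_singleton hxy hgx hgy, mul_assoc,
      ih ((transOf g).injective.ne hxy) hx hy, permOf_cons, mul_assoc]
    rfl

theorem mk_eq_mk_of_isBigon {i i' : Fin (n - 1)} {M B : List (Letter n)}
    (h : IsBigon (Letter.zeta i :: (M ++ Letter.zeta i' :: B)) 0 (M.length + 1)) :
    mk (.zeta i :: (M ++ .zeta i' :: B)) = mk (M ++ B) := by
  have hpush : z i * mk M = mk M * z i' := by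
    rw [← crossing_lo_hi, crossing_mul_mk (by simp [lo, hi, Fin.ext_iff])
      (h.freeStrand (Sym2.mem_mk_left _ _)) (h.freeStrand (Sym2.mem_mk_right _ _)),
      h.map_permOf, crossing_lo_hi]
  calc mk (.zeta i :: (M ++ .zeta i' :: B)) = z i * mk M * z i' * mk B := by
        simp only [mk_zeta_cons, mk_append, mul_assoc]
    _ = mk M * (z i' * z i') * mk B := by rw [hpush]; simp only [mul_assoc]
    _ = mk (M ++ B) := by simp

end FMonoid

end BigonReduction

/-- deleting the two crossings of a bigon yields a braid word
representing the same element of `F_n`. -/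
theorem bigon_reduction_eqF (n : ℕ) (w : List (Letter n)) (j1 j2 : ℕ)
    (h : IsBigon w j1 j2) :
    EqF w (delete2 w j1 j2) := by
  obtain ⟨A, i, M, i', B, rfl, rfl, rfl, hb⟩ := h.exists_decomposition
  rw [delete2_append_zeta_cons, ← FMonoid.mk_eq_mk_iff, FMonoid.mk_append, FMonoid.mk_append,
    FMonoid.mk_eq_mk_of_isBigon hb]

end OneTermBracket
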